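/- arXiv:math/9702223 — 2 statements merged into one kernel-verified Lean document; each statement's English description precedes it below -/
import Mathlib

section
/- Let H(x) be the formal power series ((1-8x)^{3/2} - 8x² + 20x + 1) / (2(1+x)³) over ℚ, where (1-8x)^{3/2} is the formal binomial series. Then for n ≥ 1, the coefficient of x^n in H(x) equals ((7n²-3n-2)/2)·(-1)^{n-1} + 3·Σ_{i=2}^{n} 2^{i+1} · (2i-4)!/(i!(i-2)!) · C(n-i+2,2) · (-1)^{n-i}. -/
/-!
Multiplying by `(1 + x)⁻³ = Σ_k C(k+2, 2) (-1)^k x^k` turns coefficients of `H` into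
convolutions.
For `i ≥ 2` the `i`-th coefficient of `(1 - 8x)^{3/2}` is `6 · 2^{i+1} (2i-4)! / (i! (i-2)!)`
(compare consecutive ratios), so the numerator of `H` is `2 (1 + 4x - 4x² + 3T)` with `T` the
series of those terms. The polynomial `1 + 4x - 4x²` contributes `(7n²-3n-2)/2 · (-1)^{n-1}` and
`3T` contributes the sum.
-/

open PowerSeries Finset

/-- The generalized binomial coefficient `C(r, k)` for a rational `r`. -/
def qchoose (r : ℚ) (k : ℕ) : ℚ :=
  (∏ i ∈ Finset.range k, (r - i)) / Nat.factorial k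

/-- The formal power series `(1 - 8x)^{3/2} = Σ_k C(3/2, k) (-8)^k x^k`. -/
def oneSub8XPow32 : PowerSeries ℚ :=
  PowerSeries.mk fun k => qchoose (3 / 2) k * (-8) ^ k

namespace PowerSeries

theorem mk_choose_mul_neg_one_pow_mul_one_add_X_pow (S : Type*) [CommRing S] (d : ℕ) :
    (PowerSeries.mk fun n ↦ (Nat.choose (n + d) d : S) * (-1) ^ n) * (1 + X) ^ (d + 1) = 1 := by
  have h := congrArg (rescale (-1 : S)) (mk_add_choose_mul_one_sub_pow_eq_one S d)
  rw [map_mul, map_pow, map_sub, rescale_neg_one_X, map_one, rescale_mk, sub_neg_eq_add] at h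
  convert h using 4 with n
  rw [mul_comm, add_comm]

theorem coeff_mk_ite_le_mul {R : Type*} [Semiring R] (a f : ℕ → R) (m n : ℕ) :
    coeff n ((PowerSeries.mk fun i ↦ if m ≤ i then a i else 0) * PowerSeries.mk f) =
      ∑ i ∈ Icc m n, a i * f (n - i) := by
  have hIcc : Icc m n = (range (n + 1)).filter (m ≤ ·) := by
    ext i; simp only [mem_Icc, mem_filter, mem_range]; omega
  rw [coeff_mul, Nat.sum_antidiagonal_eq_sum_range_succ fun i j ↦ coeff i _ * coeff j (mk f),
    hIcc, sum_filter]
  simp only [coeff_mk, ite_mul, zero_mul]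

end PowerSeries

theorem qchoose_succ (r : ℚ) (k : ℕ) : qchoose r (k + 1) = qchoose r k * (r - k) / (k + 1) := by
  have hk : (k.factorial : ℚ) ≠ 0 := by positivity
  rw [qchoose, qchoose, prod_range_succ, Nat.factorial_succ]
  push_cast
  field_simp

def binomTerm (i : ℕ) : ℚ :=
  2 ^ (i + 1) * (Nat.factorial (2 * i - 4) : ℚ) / (Nat.factorial i * Nat.factorial (i - 2))

theorem binomTerm_add_three (k : ℕ) :
    binomTerm (k + 3) = binomTerm (k + 2) * (8 * k + 4) / (k + 3) := by
  have hk : (k.factorial : ℚ) ≠ 0 := by positivity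
  have h2k : ((2 * k).factorial : ℚ) ≠ 0 := by positivity
  rw [binomTerm, binomTerm, show 2 * (k + 3) - 4 = 2 * k + 1 + 1 by omega,
    show 2 * (k + 2) - 4 = 2 * k by omega, show k + 3 - 2 = k + 1 by omega,
    show k + 2 - 2 = k by omega]
  simp only [Nat.factorial_succ]
  push_cast
  field_simp
  ring

theorem qchoose_three_halves_mul_pow (k : ℕ) :
    qchoose (3 / 2) (k + 2) * (-8) ^ (k + 2) = 6 * binomTerm (k + 2) := by
  induction k with
  | zero => norm_num [qchoose, binomTerm, prod_range_succ, Nat.factorial]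
  | succ k ih =>
    rw [qchoose_succ, binomTerm_add_three, pow_succ]
    push_cast
    linear_combination (-8 * (3 / 2 - ((k : ℚ) + 2)) / (k + 3)) * ih

theorem oneSub8XPow32_eq :
    oneSub8XPow32 =
      1 - 12 * X + 6 * PowerSeries.mk fun i ↦ if 2 ≤ i then binomTerm i else 0 := by
  ext n
  rw [← map_ofNat C 12, ← map_ofNat C 6]
  rcases n with _ | _ | k
  · simp [oneSub8XPow32, qchoose]
  · norm_num [oneSub8XPow32, qchoose]
  · simp [oneSub8XPow32, coeff_C_mul, qchoose_three_halves_mul_pow]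

theorem coeff_one_add_four_X_sub_four_X_sq_mul (n : ℕ) (hn : 1 ≤ n) :
    coeff n ((1 + 4 * X - 4 * X ^ 2) *
        PowerSeries.mk fun k ↦ (Nat.choose (k + 2) 2 : ℚ) * (-1) ^ k) =
      ((7 * (n : ℚ) ^ 2 - 3 * n - 2) / 2) * (-1) ^ (n - 1) := by
  rw [← map_ofNat C 4]
  rcases n with _ | _ | m
  · omega
  · simp [sub_mul, add_mul, coeff_X_pow_mul', mul_assoc, coeff_C_mul]
    norm_num
  · simp [sub_mul, add_mul, coeff_X_pow_mul', mul_assoc, coeff_C_mul, Nat.cast_choose_two]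
    ring

/-- If `H(x) = ((1-8x)^{3/2} - 8x² + 20x + 1) / (2(1+x)³)` as a formal power
series over `ℚ`, then for `n ≥ 1` the coefficient of `x^n` in `H` equals
the explicit formula for `S_n(1342)`. -/
theorem coeff_H_eq_formula (H : PowerSeries ℚ)
    (hH : 2 * (1 + PowerSeries.X) ^ 3 * H =
      oneSub8XPow32 - 8 * PowerSeries.X ^ 2 + 20 * PowerSeries.X + 1)
    (n : ℕ) (hn : 1 ≤ n) :
    PowerSeries.coeff n H =
      ((7 * (n : ℚ) ^ 2 - 3 * n - 2) / 2) * (-1) ^ (n - 1) +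
        3 * ∑ i ∈ Finset.Icc 2 n,
          2 ^ (i + 1) * (Nat.factorial (2 * i - 4) : ℚ) /
            (Nat.factorial i * Nat.factorial (i - 2)) *
            (Nat.choose (n - i + 2) 2) * (-1) ^ (n - i) := by
  set c := PowerSeries.mk fun k ↦ (Nat.choose (k + 2) 2 : ℚ) * (-1) ^ k
  set T := PowerSeries.mk fun i ↦ if 2 ≤ i then binomTerm i else 0
  have htwo : (2 : ℚ⟦X⟧) ≠ 0 :=
    ne_of_apply_ne constantCoeff (by rw [map_ofNat, map_zero]; norm_num)
  have hP : (1 + X) ^ 3 * H = 1 + 4 * X - 4 * X ^ 2 + 3 * T :=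
    mul_left_cancel₀ htwo <| by rw [← mul_assoc, hH, oneSub8XPow32_eq]; ring
  have hHc : H = (1 + 4 * X - 4 * X ^ 2) * c + C 3 * (T * c) := by
    calc H = (c * (1 + X) ^ 3) * H := by
          rw [mk_choose_mul_neg_one_pow_mul_one_add_X_pow, one_mul]
      _ = _ := by rw [mul_assoc, hP, map_ofNat]; ring
  rw [hHc, map_add, coeff_C_mul, coeff_one_add_four_X_sub_four_X_sq_mul n hn,
    coeff_mk_ite_le_mul]
  simp only [binomTerm, mul_assoc]
end

section
/- The number of 132-avoiding permutations of {1,...,n} equals the Catalan number C_n = (2n choose n)/(n+1). -/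
/-!
If a 132-avoiding permutation of length `a + b + 1` has its maximum at position `a`, every entry
to the left of the maximum exceeds every entry to its right, since otherwise the two entries and
the maximum would form a 132. So the left block is a 132-avoiding arrangement of the top `a`
values and the right block one of the bottom `b` values, and conversely any two 132-avoiding
permutations glue to such a permutation. Summing over the position of the maximum gives
`|Av₁₃₂(n + 1)| = ∑ₐ |Av₁₃₂(a)| |Av₁₃₂(n - a)|`, the Catalan recursion.
-/

open Finset Function Equiv

def Avoids132 {ι α : Type*} [LT ι] [LT α] (f : ι → α) : Prop :=
  ∀ ⦃i j k⦄, i < j → j < k → ¬(f i < f k ∧ f k < f j)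

namespace Avoids132

variable {ι κ α β : Type*}

theorem comp_strictMono [Preorder ι] [Preorder κ] [LT α] {f : ι → α} {g : κ → ι}
    (hf : Avoids132 f) (hg : StrictMono g) : Avoids132 (f ∘ g) :=
  fun _ _ _ hij hjk => hf (hg hij) (hg hjk)

theorem strictMono_comp_iff [LT ι] [LinearOrder α] [Preorder β] {f : ι → α} {h : α → β}
    (hh : StrictMono h) : Avoids132 (h ∘ f) ↔ Avoids132 f := by
  simp only [Avoids132, comp_apply, hh.lt_iff_lt]

end Avoids132

theorem Function.Injective.exists_perm_comp_eq {α β : Type*} [Finite α] {g e : α → β}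
    (hg : Injective g) (h : Set.range g ⊆ Set.range e) :
    ∃ σ : Perm α, g = e ∘ σ := by
  choose f hf using fun x => h ⟨x, rfl⟩
  have hf_inj : Injective f := fun x y hxy => hg (by rw [← hf x, ← hf y, hxy])
  exact ⟨ofBijective f hf_inj.bijective_of_finite, funext fun x => (hf x).symm⟩

namespace Fin

theorem le_val_of_injective_of_forall_lt {m n : ℕ} {f : Fin m → Fin n} (hf : Injective f)
    {x : Fin n} (h : ∀ i, f i < x) : m ≤ x := by
  simpa using card_le_card_of_injOn (s := univ) (t := Iio x) f
    (fun i _ => mem_Iio.2 (h i)) hf.injOn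

theorem add_val_lt_of_injective_of_forall_gt {m n : ℕ} {f : Fin m → Fin n} (hf : Injective f)
    {x : Fin n} (h : ∀ i, x < f i) : m + x < n := by
  have := card_le_card_of_injOn (s := univ) (t := Ioi x) f
    (fun i _ => mem_Ioi.2 (h i)) hf.injOn
  simp only [card_univ, Fintype.card_fin, card_Ioi] at this
  omega

end Fin

namespace Avoids132

section Blocks

variable {a b : ℕ}

def leftPos (i : Fin a) : Fin (a + b + 1) := ⟨i, by omega⟩

def maxPos : Fin (a + b + 1) := ⟨a, by omega⟩

def rightPos (k : Fin b) : Fin (a + b + 1) := ⟨a + 1 + k, by omega⟩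

def highVal (v : Fin a) : Fin (a + b + 1) := ⟨b + v, by omega⟩

def lowVal (v : Fin b) : Fin (a + b + 1) := ⟨v, by omega⟩

theorem leftPos_strictMono : StrictMono (leftPos : Fin a → Fin (a + b + 1)) :=
  fun _ _ h => h

theorem rightPos_strictMono : StrictMono (rightPos : Fin b → Fin (a + b + 1)) :=
  fun _ _ h => Nat.add_lt_add_left h _

theorem highVal_strictMono : StrictMono (highVal : Fin a → Fin (a + b + 1)) :=
  fun _ _ h => Nat.add_lt_add_left h _

theorem lowVal_strictMono : StrictMono (lowVal : Fin b → Fin (a + b + 1)) :=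
  fun _ _ h => h

@[simp] theorem leftPos_lt_maxPos (i : Fin a) : leftPos i < (maxPos : Fin (a + b + 1)) := i.isLt

@[simp] theorem maxPos_lt_rightPos (k : Fin b) : (maxPos : Fin (a + b + 1)) < rightPos k :=
  Fin.mk_lt_mk.2 (by omega)

@[simp] theorem leftPos_lt_rightPos (i : Fin a) (k : Fin b) :
    (leftPos i : Fin (a + b + 1)) < rightPos k :=
  (leftPos_lt_maxPos i).trans (maxPos_lt_rightPos k)

@[simp] theorem lowVal_lt_highVal (v : Fin b) (w : Fin a) :
    (lowVal v : Fin (a + b + 1)) < highVal w :=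
  Fin.mk_lt_mk.2 (by omega)

@[simp] theorem highVal_lt_last (v : Fin a) : (highVal v : Fin (a + b + 1)) < Fin.last _ :=
  Fin.mk_lt_mk.2 (by omega)

@[simp] theorem lowVal_lt_last (v : Fin b) : (lowVal v : Fin (a + b + 1)) < Fin.last _ :=
  Fin.mk_lt_mk.2 (by omega)

theorem pos_cases (x : Fin (a + b + 1)) :
    (∃ i, x = leftPos i) ∨ x = maxPos ∨ ∃ k, x = rightPos k := by
  rcases lt_trichotomy (x : ℕ) a with h | h | h
  · exact .inl ⟨⟨x, h⟩, rfl⟩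
  · exact .inr (.inl (Fin.ext h))
  · exact .inr (.inr ⟨⟨x - a - 1, by omega⟩, Fin.ext (by simp [rightPos]; omega)⟩)

variable (q : Perm (Fin a)) (r : Perm (Fin b))

def glueFun (x : Fin (a + b + 1)) : Fin (a + b + 1) :=
  if h : (x : ℕ) < a then highVal (q ⟨x, h⟩)
  else if h' : a < (x : ℕ) then lowVal (r ⟨x - a - 1, by omega⟩)
  else Fin.last _

@[simp] theorem glueFun_leftPos (i : Fin a) : glueFun q r (leftPos i) = highVal (q i) :=
  dif_pos i.isLt

@[simp] theorem glueFun_maxPos : glueFun q r maxPos = Fin.last _ := by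
  simp [glueFun, maxPos]

@[simp] theorem glueFun_rightPos (k : Fin b) : glueFun q r (rightPos k) = lowVal (r k) := by
  rw [glueFun, dif_neg (by simp [rightPos]; omega), dif_pos (by simp [rightPos]; omega)]
  congr
  simp only [rightPos]
  omega

theorem glueFun_injective : Injective (glueFun q r) := by
  intro x y hxy
  rcases pos_cases x with ⟨i, rfl⟩ | rfl | ⟨k, rfl⟩ <;>
    rcases pos_cases y with ⟨i', rfl⟩ | rfl | ⟨k', rfl⟩ <;>
    simp [highVal_strictMono.injective.eq_iff, lowVal_strictMono.injective.eq_iff,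
      (lowVal_lt_highVal _ _).ne, (lowVal_lt_highVal _ _).ne', (highVal_lt_last _).ne,
      (lowVal_lt_last _).ne, (highVal_lt_last _).ne', (lowVal_lt_last _).ne'] at hxy ⊢ <;>
    simp [hxy]

noncomputable def glue : Perm (Fin (a + b + 1)) :=
  ofBijective _ (glueFun_injective q r).bijective_of_finite

@[simp] theorem glue_leftPos (i : Fin a) : glue q r (leftPos i) = highVal (q i) :=
  glueFun_leftPos q r i

@[simp] theorem glue_maxPos : glue q r maxPos = Fin.last _ :=
  glueFun_maxPos q r

@[simp] theorem glue_rightPos (k : Fin b) : glue q r (rightPos k) = lowVal (r k) :=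
  glueFun_rightPos q r k

variable {q r}

theorem avoids132_glue (hq : Avoids132 q) (hr : Avoids132 r) : Avoids132 (glue q r) := by
  intro i j k hij hjk
  -- values decrease from block to block, so a 132 cannot straddle two blocks
  rcases pos_cases i with ⟨i, rfl⟩ | rfl | ⟨i, rfl⟩ <;>
    rcases pos_cases j with ⟨j, rfl⟩ | rfl | ⟨j, rfl⟩ <;>
    rcases pos_cases k with ⟨k, rfl⟩ | rfl | ⟨k, rfl⟩ <;>
    simp [leftPos_strictMono.lt_iff_lt, rightPos_strictMono.lt_iff_lt,
      highVal_strictMono.lt_iff_lt, lowVal_strictMono.lt_iff_lt, (leftPos_lt_maxPos _).not_gt,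
      (maxPos_lt_rightPos _).not_gt, (leftPos_lt_rightPos _ _).not_gt,
      (lowVal_lt_highVal _ _).not_gt, (highVal_lt_last _).not_gt, (lowVal_lt_last _).not_gt]
      at hij hjk ⊢
  · exact fun hik => not_lt.1 fun hkj => hq hij hjk ⟨hik, hkj⟩
  · exact fun hik => not_lt.1 fun hkj => hr hij hjk ⟨hik, hkj⟩

theorem glue_injective :
    Injective fun qr : Perm (Fin a) × Perm (Fin b) => glue qr.1 qr.2 := by
  rintro ⟨q, r⟩ ⟨q', r'⟩ h
  have hq : ∀ i, q i = q' i := fun i =>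
    highVal_strictMono.injective (by simpa using congr(($h) (leftPos i)))
  have hr : ∀ k, r k = r' k := fun k =>
    lowVal_strictMono.injective (by simpa using congr(($h) (rightPos k)))
  simp [Prod.ext_iff, Equiv.ext_iff, hq, hr]

theorem exists_glue {p : Perm (Fin (a + b + 1))} (hp : Avoids132 p)
    (hmax : p maxPos = Fin.last _) :
    ∃ (q : Perm (Fin a)) (r : Perm (Fin b)), Avoids132 q ∧ Avoids132 r ∧ glue q r = p := by
  have hlt_last : ∀ {x}, x ≠ maxPos → p x < Fin.last _ := fun hx =>
    (Fin.le_last _).lt_of_ne (hmax ▸ p.injective.ne hx)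
  -- otherwise `(leftPos i, maxPos, rightPos k)` is a 132
  have hcross : ∀ i k, p (rightPos k) < p (leftPos i) := fun i k =>
    (lt_or_gt_of_ne (p.injective.ne (leftPos_lt_rightPos i k).ne)).resolve_left fun h =>
      hp (leftPos_lt_maxPos i) (maxPos_lt_rightPos k)
        ⟨h, hmax ▸ hlt_last (maxPos_lt_rightPos k).ne'⟩
  have hleft : Set.range (p ∘ leftPos) ⊆ Set.range highVal := by
    rintro _ ⟨i, rfl⟩
    have hb : b ≤ p (leftPos i) := Fin.le_val_of_injective_of_forall_lt
      (p.injective.comp rightPos_strictMono.injective) (hcross i)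
    have ha : p (leftPos i) < Fin.last _ := hlt_last (leftPos_lt_maxPos i).ne
    exact ⟨⟨p (leftPos i) - b, by simp [Fin.lt_def] at ha; omega⟩,
      Fin.ext (by simp [highVal]; omega)⟩
  have hright : Set.range (p ∘ rightPos) ⊆ Set.range lowVal := by
    rintro _ ⟨k, rfl⟩
    -- the `a + 1` entries at or left of `maxPos` all exceed `p (rightPos k)`
    have hk : a + 1 + p (rightPos k) < a + b + 1 := by
      refine Fin.add_val_lt_of_injective_of_forall_gt
        (f := fun j : Fin (a + 1) => p ⟨j, by omega⟩)
        (fun j j' h => Fin.ext (Fin.val_eq_of_eq (p.injective h) :)) fun j => ?_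
      exact Fin.lastCases (hmax ▸ hlt_last (maxPos_lt_rightPos k).ne') (fun i => hcross i k) j
    exact ⟨⟨p (rightPos k), by omega⟩, rfl⟩
  obtain ⟨q, hq⟩ := (p.injective.comp leftPos_strictMono.injective).exists_perm_comp_eq hleft
  obtain ⟨r, hr⟩ := (p.injective.comp rightPos_strictMono.injective).exists_perm_comp_eq hright
  refine ⟨q, r, ?_, ?_, ?_⟩
  · rw [← strictMono_comp_iff highVal_strictMono, ← hq]
    exact hp.comp_strictMono leftPos_strictMono
  · rw [← strictMono_comp_iff lowVal_strictMono, ← hr]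
    exact hp.comp_strictMono rightPos_strictMono
  · ext1 x
    rcases pos_cases x with ⟨i, rfl⟩ | rfl | ⟨k, rfl⟩
    · simpa using (congrFun hq i).symm
    · simp [hmax]
    · simpa using (congrFun hr k).symm

end Blocks

end Avoids132

instance {m n : ℕ} : DecidablePred (Avoids132 : (Fin m → Fin n) → Prop) := fun f =>
  inferInstanceAs (Decidable (∀ ⦃i j k : Fin m⦄, i < j → j < k → ¬(f i < f k ∧ f k < f j)))

def av132 (n : ℕ) : Finset (Perm (Fin n)) := {p | Avoids132 p}

open Avoids132 in
theorem card_filter_apply_maxPos_eq_last (a b : ℕ) :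
    #{p ∈ av132 (a + b + 1) | p maxPos = Fin.last _} = #(av132 a) * #(av132 b) := by
  rw [← card_product, ← card_image_of_injective _ glue_injective]
  congr 1
  ext p
  simp only [av132, mem_filter, mem_univ, true_and, mem_image, mem_product, Prod.exists]
  constructor
  · rintro ⟨hp, hmax⟩
    obtain ⟨q, r, hq, hr, rfl⟩ := exists_glue hp hmax
    exact ⟨q, r, ⟨hq, hr⟩, rfl⟩
  · rintro ⟨q, r, ⟨hq, hr⟩, rfl⟩
    exact ⟨avoids132_glue hq hr, glue_maxPos q r⟩

theorem card_filter_symm_last_eq (n : ℕ) (m : Fin (n + 1)) :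
    #{p ∈ av132 (n + 1) | p.symm (Fin.last n) = m} = #(av132 m) * #(av132 (n - m)) := by
  obtain ⟨m, hm⟩ := m
  obtain ⟨b, rfl⟩ := Nat.exists_eq_add_of_le (Nat.lt_succ_iff.1 hm)
  have hfiber (p : Perm (Fin (m + b + 1))) :
      p.symm (Fin.last _) = ⟨m, hm⟩ ↔ p Avoids132.maxPos = Fin.last _ := by
    rw [symm_apply_eq, eq_comm]
    rfl
  rw [filter_congr fun p _ => hfiber p, card_filter_apply_maxPos_eq_last,
    Nat.add_sub_cancel_left]

theorem card_av132 (n : ℕ) : #(av132 n) = catalan n := by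
  induction n using Nat.strong_induction_on with
  | _ n ih =>
  cases n with
  | zero => simp [av132, Avoids132]
  | succ n =>
    rw [card_eq_sum_card_fiberwise (f := fun p => p.symm (Fin.last n)) (t := univ)
      (fun _ _ => mem_univ _), catalan_succ]
    refine sum_congr rfl fun m _ => ?_
    rw [card_filter_symm_last_eq, ih m (by omega), ih (n - m) (by omega)]

/-- The number of 132-avoiding permutations of `{1,...,n}` is the `n`-th
Catalan number. -/
theorem card_avoid132_eq_catalan (n : ℕ) :
    (Finset.univ.filter fun p : Equiv.Perm (Fin n) =>
        ∀ i j k : Fin n, i < j → j < k → ¬(p i < p k ∧ p k < p j)).card =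
      catalan n :=
  card_av132 n
end
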